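/- arXiv:1707.02758 — 8 statements merged into one kernel-verified Lean document; each statement's English description precedes it below -/
import Mathlib

section
/- Let 0 < β < γ and let y : [0,∞) → ℝ be differentiable with y′(t) = β y(t)(1 − y(t)) − γ y(t) for all t ≥ 0 and y(0) ∈ [0,1]. Then y(t) → 0 as t → ∞. -/
open Set Filter Real

/-- For the deterministic SIS model `dy/dt = β y (1-y) - γ y` with `0 < β < γ`
(i.e. `R₀ = β/γ < 1`) and initial condition `y(0) ∈ [0,1]`, the solution tends
to the disease-free equilibrium `0` as `t → ∞`. -/
theorem sis_deterministic_subcritical_extinction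
    (β γ : ℝ) (hβ : 0 < β) (hβγ : β < γ)
    (y : ℝ → ℝ)
    (hy : ∀ t : ℝ, 0 ≤ t → HasDerivAt y (β * y t * (1 - y t) - γ * y t) t)
    (hy0 : y 0 ∈ Set.Icc (0 : ℝ) 1) :
    Filter.Tendsto y Filter.atTop (nhds 0) := by
  have hγ : 0 < γ := hβ.trans hβγ
  have hcont : ∀ t : ℝ, 0 ≤ t → ContinuousAt y t := fun t ht => (hy t ht).continuousAt
  -- Step A: nonnegativity
  have hnonneg : ∀ t : ℝ, 0 ≤ t → 0 ≤ y t := by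
    intro t₁ ht₁
    by_contra hneg
    push_neg at hneg
    have hcOn : ContinuousOn y (Icc 0 t₁) := fun s hs => (hcont s hs.1).continuousWithinAt
    set S : Set ℝ := Icc 0 t₁ ∩ y ⁻¹' (Ici 0) with hS
    have hSclosed : IsClosed S := hcOn.preimage_isClosed_of_isClosed isClosed_Icc isClosed_Ici
    have hScpt : IsCompact S := isCompact_Icc.of_isClosed_subset hSclosed inter_subset_left
    have hSne : S.Nonempty := ⟨0, ⟨le_refl 0, ht₁⟩, hy0.1⟩
    set t₀ := sSup S with ht₀def
    have ht₀S : t₀ ∈ S := hScpt.sSup_mem hSne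
    obtain ⟨⟨ht₀0, ht₀t₁⟩, ht₀y⟩ := ht₀S
    have ht₀lt : t₀ < t₁ := by
      rcases eq_or_lt_of_le ht₀t₁ with h | h
      · rw [h] at ht₀y; exact absurd ht₀y (not_le.2 hneg)
      · exact h
    have hafter : ∀ s ∈ Ioc t₀ t₁, y s < 0 := by
      intro s hs
      by_contra h
      push_neg at h
      have : s ∈ S := ⟨⟨ht₀0.trans hs.1.le, hs.2⟩, h⟩
      exact absurd (le_csSup hScpt.bddAbove this) (not_le.2 hs.1)
    -- y t₀ = 0
    have ht₀eq : y t₀ = 0 := by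
      refine le_antisymm ?_ ht₀y
      have htend : Tendsto y (nhdsWithin t₀ (Ioi t₀)) (nhds (y t₀)) :=
        ((hcont t₀ ht₀0).continuousWithinAt).tendsto
      refine le_of_tendsto htend ?_
      filter_upwards [Ioc_mem_nhdsGT_of_mem ⟨le_refl t₀, ht₀lt⟩] with s hs
      exact (hafter s hs).le
    -- bound and Grönwall
    obtain ⟨M, hM⟩ := (isCompact_Icc (a := t₀) (b := t₁)).exists_bound_of_continuousOn
      (hcOn.mono (Icc_subset_Icc ht₀0 le_rfl))
    have key := norm_le_gronwallBound_of_norm_deriv_right_le (E := ℝ)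
      (f := y) (f' := fun s => β * y s * (1 - y s) - γ * y s)
      (δ := 0) (K := β * M + β + γ) (ε := 0) (a := t₀) (b := t₁)
      (hcOn.mono (Icc_subset_Icc ht₀0 le_rfl))
      (fun s hs => ((hy s (ht₀0.trans hs.1)).hasDerivWithinAt))
      (by simp [ht₀eq])
      (by
        intro s hs
        have hMs := hM s ⟨hs.1, hs.2.le⟩
        have hM0 : 0 ≤ M := (norm_nonneg _).trans hMs
        have : |β * y s * (1 - y s) - γ * y s| ≤ (β * M + β + γ) * |y s| := by
          have h1 : β * y s * (1 - y s) - γ * y s = (β * (1 - y s) - γ) * y s := by ring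
          rw [h1, abs_mul]
          apply mul_le_mul_of_nonneg_right _ (abs_nonneg _)
          have : |β * (1 - y s) - γ| ≤ β * |1 - y s| + γ := by
            calc |β * (1 - y s) - γ| ≤ |β * (1 - y s)| + |γ| := abs_sub _ _
            _ = β * |1 - y s| + γ := by rw [abs_mul, abs_of_pos hβ, abs_of_pos hγ]
          refine this.trans ?_
          have : |1 - y s| ≤ 1 + M := by
            calc |1 - y s| ≤ |(1:ℝ)| + |y s| := abs_sub _ _
            _ ≤ 1 + M := by simp; exact (Real.norm_eq_abs _ ▸ hMs)
          nlinarith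
        simpa [Real.norm_eq_abs] using this.trans (le_of_eq (by ring)))
      t₁ ⟨ht₀lt.le, le_rfl⟩
    rw [gronwallBound_ε0_δ0] at key
    simp only [Real.norm_eq_abs] at key
    have : y t₁ = 0 := abs_eq_zero.mp (le_antisymm key (abs_nonneg _))
    linarith
  -- Step B: y ≤ 1
  have hle1 : ∀ t : ℝ, 0 ≤ t → y t ≤ 1 := by
    intro t₁ ht₁
    by_contra hgt
    push_neg at hgt
    have hcOn : ContinuousOn y (Icc 0 t₁) := fun s hs => (hcont s hs.1).continuousWithinAt
    set S : Set ℝ := Icc 0 t₁ ∩ y ⁻¹' (Iic 1) with hS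
    have hSclosed : IsClosed S := hcOn.preimage_isClosed_of_isClosed isClosed_Icc isClosed_Iic
    have hScpt : IsCompact S := isCompact_Icc.of_isClosed_subset hSclosed inter_subset_left
    have hSne : S.Nonempty := ⟨0, ⟨le_refl 0, ht₁⟩, hy0.2⟩
    set t₀ := sSup S with ht₀def
    have ht₀S : t₀ ∈ S := hScpt.sSup_mem hSne
    obtain ⟨⟨ht₀0, ht₀t₁⟩, ht₀y⟩ := ht₀S
    have ht₀lt : t₀ < t₁ := by
      rcases eq_or_lt_of_le ht₀t₁ with h | h
      · rw [h] at ht₀y; exact absurd ht₀y (not_le.2 hgt)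
      · exact h
    have hafter : ∀ s ∈ Ioc t₀ t₁, 1 < y s := by
      intro s hs
      by_contra h
      push_neg at h
      have : s ∈ S := ⟨⟨ht₀0.trans hs.1.le, hs.2⟩, h⟩
      exact absurd (le_csSup hScpt.bddAbove this) (not_le.2 hs.1)
    -- y strictly decreasing on [t₀, t₁] since y ≥ 1 there
    have hanti : StrictAntiOn y (Icc t₀ t₁) := by
      apply strictAntiOn_of_deriv_neg (convex_Icc t₀ t₁)
        (hcOn.mono (Icc_subset_Icc ht₀0 le_rfl))
      intro s hs
      rw [interior_Icc] at hs
      have hys : 1 < y s := hafter s ⟨hs.1, hs.2.le⟩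
      have hds := hy s (ht₀0.trans hs.1.le)
      rw [hds.deriv]
      have hA : 0 < γ * y s := mul_pos hγ (by linarith)
      have hB : β * y s * (1 - y s) ≤ 0 := by nlinarith [mul_pos hβ (by linarith : (0:ℝ) < y s)]
      linarith
    have h1 : y t₁ < y t₀ := hanti ⟨le_rfl, ht₀lt.le⟩ ⟨ht₀lt.le, le_rfl⟩ ht₀lt
    have h2 := hafter t₁ ⟨ht₀lt, le_rfl⟩
    have h3 : y t₀ ≤ 1 := ht₀y
    linarith
  -- Step C: y t ≤ y 0 * exp ((β - γ) * t)
  have hbound : ∀ t : ℝ, 0 ≤ t → y t ≤ y 0 * Real.exp ((β - γ) * t) := by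
    intro t ht
    have key := le_gronwallBound_of_liminf_deriv_right_le
      (f := y) (f' := fun s => β * y s * (1 - y s) - γ * y s)
      (δ := y 0) (K := β - γ) (ε := 0) (a := 0) (b := t)
      (fun s hs => (hcont s hs.1).continuousWithinAt)
      (by
        intro s hs r hr
        have := ((hy s hs.1).hasDerivWithinAt (s := Ici s)).liminf_right_slope_le hr
        refine this.mono fun z hz => ?_
        rwa [slope_def_field, div_eq_inv_mul] at hz)
      le_rfl
      (by
        intro s hs
        have h0 := hnonneg s hs.1
        have h1 := hle1 s hs.1
        show β * y s * (1 - y s) - γ * y s ≤ (β - γ) * y s + 0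
        nlinarith [mul_nonneg (mul_nonneg hβ.le h0) h0])
      t ⟨ht, le_rfl⟩
    rwa [gronwallBound_ε0, sub_zero] at key
  -- squeeze
  have hupper : Tendsto (fun t => y 0 * Real.exp ((β - γ) * t)) atTop (nhds 0) := by
    have h1 : Tendsto (fun t : ℝ => (β - γ) * t) atTop atBot :=
      Tendsto.const_mul_atTop_of_neg (by linarith) tendsto_id
    have := (Real.tendsto_exp_atBot.comp h1).const_mul (y 0)
    simpa using this
  have hlower : Tendsto (fun _ : ℝ => (0:ℝ)) atTop (nhds 0) := tendsto_const_nhds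
  refine tendsto_of_tendsto_of_tendsto_of_le_of_le' hlower hupper ?_ ?_
  · filter_upwards [eventually_ge_atTop (0:ℝ)] with t ht using hnonneg t ht
  · filter_upwards [eventually_ge_atTop (0:ℝ)] with t ht using hbound t ht
end

section
/- Let k be a positive integer, β, γ > 0, N > 0. Let J be the k×k matrix with J₁₁ = 2γ − β − kγ, J₁ₘ = 2γ − β for m = 2,…,k, Jₘ,ₘ₋₁ = kγ and Jₘₘ = −kγ for m = 2,…,k, and all other entries zero. Let B̃ = Nγ(1 − γ/β) T, where T is the k×k tridiagonal matrix with 2 on the diagonal and −1 on the super- and sub-diagonals. Let V = (N/k)(1 − γ/β) I_k + (N/k²)(2γ/β − 1) 𝟙_k, where I_k is the identity matrix and 𝟙_k is the k×k matrix of all ones. Then J V + V Jᵀ = −B̃. -/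
/-!
Write `V = a • 1 + b • 𝟙` with `𝟙` the all-ones matrix, so that
`J V + V Jᵀ = a (J + Jᵀ) + b (J 𝟙 + (J 𝟙)ᵀ)`. The drift splits as `J = (2γ - β) E + kγ (S - 1)`,
where `E` has ones in its first row and zeros elsewhere and `S` is the subdiagonal shift. Since
`S 𝟙 = 𝟙 - E` and `E 𝟙 = k E`, this gives `J 𝟙 = k (γ - β) E`, and since `S + Sᵀ = 2 - T` it gives
`J + Jᵀ = (2γ - β)(E + Eᵀ) - kγ T`. For the given `a` and `b` the coefficient
`a (2γ - β) + b k (γ - β)` of `E + Eᵀ` vanishes, and `a kγ = Nγ (1 - γ/β)`.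
-/

open Matrix

namespace Matrix

def allOnes (n R : Type*) [One R] : Matrix n n R := of fun _ _ => 1

@[simp] lemma allOnes_apply {n R : Type*} [One R] (i j : n) : allOnes n R i j = 1 := rfl

@[simp] lemma transpose_allOnes {n R : Type*} [One R] : (allOnes n R)ᵀ = allOnes n R := rfl

lemma mul_add_mul_transpose_smul_one_add_smul_allOnes {n R : Type*} [Fintype n] [DecidableEq n]
    [CommRing R] (J : Matrix n n R) (a b : R) :
    J * (a • 1 + b • allOnes n R) + (a • 1 + b • allOnes n R) * Jᵀ
      = a • (J + Jᵀ) + b • (J * allOnes n R + (J * allOnes n R)ᵀ) := by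
  simp only [Matrix.mul_add, Matrix.add_mul, Matrix.mul_smul, Matrix.smul_mul, Matrix.mul_one,
    Matrix.one_mul, transpose_mul, transpose_allOnes, smul_add]
  abel

end Matrix

namespace SISErlang

variable (R : Type*) [CommRing R] (k : ℕ)

def topRowOnes : Matrix (Fin k) (Fin k) R := of fun i _ => if (i : ℕ) = 0 then 1 else 0

def subdiagShift : Matrix (Fin k) (Fin k) R := of fun i j => if (j : ℕ) + 1 = i then 1 else 0

def tridiag : Matrix (Fin k) (Fin k) R :=
  of fun i j => if i = j then 2 else if (i : ℕ) + 1 = (j : ℕ) ∨ (j : ℕ) + 1 = (i : ℕ) then -1 else 0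

variable {R}

def drift (β γ : R) : Matrix (Fin k) (Fin k) R := of fun i j =>
  if (i : ℕ) = 0 then
    (if (j : ℕ) = 0 then 2 * γ - β - k * γ else 2 * γ - β)
  else if (j : ℕ) + 1 = (i : ℕ) then k * γ
  else if j = i then -(k * γ)
  else 0

lemma topRowOnes_mul_allOnes :
    topRowOnes R k * allOnes (Fin k) R = (k : R) • topRowOnes R k := by
  ext i j
  simp [topRowOnes, mul_apply]

lemma subdiagShift_mul_allOnes :
    subdiagShift R k * allOnes (Fin k) R = allOnes (Fin k) R - topRowOnes R k := by
  ext i j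
  simp only [subdiagShift, topRowOnes, mul_apply, of_apply, allOnes_apply, mul_one,
    Matrix.sub_apply]
  rcases eq_or_ne (i : ℕ) 0 with hi | hi
  · simp [hi]
  · have hpred : ({m | (m : ℕ) + 1 = i} : Finset (Fin k)) = {⟨i - 1, by omega⟩} := by
      ext m
      simp [Fin.ext_iff]
      omega
    simp [Finset.sum_boole, hpred, hi]

lemma tridiag_eq :
    tridiag R k = (2 : R) • 1 - subdiagShift R k - (subdiagShift R k)ᵀ := by
  ext i j
  simp [subdiagShift, tridiag, one_apply, Fin.ext_iff]
  split_ifs <;> first | omega | norm_num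

lemma drift_eq (β γ : R) :
    drift k β γ = (2 * γ - β) • topRowOnes R k + (k * γ) • (subdiagShift R k - 1) := by
  ext i j
  simp [drift, topRowOnes, subdiagShift, one_apply, Fin.ext_iff]
  split_ifs <;> first | omega | ring

lemma drift_mul_allOnes (β γ : R) :
    drift k β γ * allOnes (Fin k) R = (k * (γ - β)) • topRowOnes R k := by
  rw [drift_eq, Matrix.add_mul, Matrix.smul_mul, Matrix.smul_mul, Matrix.sub_mul, Matrix.one_mul,
    topRowOnes_mul_allOnes, subdiagShift_mul_allOnes]
  module

lemma drift_add_transpose (β γ : R) :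
    drift k β γ + (drift k β γ)ᵀ
      = (2 * γ - β) • (topRowOnes R k + (topRowOnes R k)ᵀ) - (k * γ) • tridiag R k := by
  rw [drift_eq, tridiag_eq]
  simp only [transpose_add, transpose_smul, transpose_sub, transpose_one]
  module

lemma drift_mul_add_mul_transpose (β γ a b : R) :
    drift k β γ * (a • 1 + b • allOnes (Fin k) R)
        + (a • 1 + b • allOnes (Fin k) R) * (drift k β γ)ᵀ
      = (a * (2 * γ - β) + b * (k * (γ - β))) • (topRowOnes R k + (topRowOnes R k)ᵀ)
        - (a * (k * γ)) • tridiag R k := by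
  rw [mul_add_mul_transpose_smul_one_add_smul_allOnes, drift_add_transpose, drift_mul_allOnes,
    transpose_smul]
  module

end SISErlang

theorem sis_erlang_OU_lyapunov_general
    (k : ℕ) (β γ N : ℝ) (hβ : 0 < β) :
    let J : Matrix (Fin k) (Fin k) ℝ := Matrix.of fun i j =>
      if (i : ℕ) = 0 then
        (if (j : ℕ) = 0 then 2 * γ - β - k * γ else 2 * γ - β)
      else if (j : ℕ) + 1 = (i : ℕ) then k * γ
      else if j = i then -(k * γ)
      else 0
    let B : Matrix (Fin k) (Fin k) ℝ := Matrix.of fun i j =>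
      N * γ * (1 - γ / β) *
        (if i = j then 2 else if (i : ℕ) + 1 = (j : ℕ) ∨ (j : ℕ) + 1 = (i : ℕ) then -1 else 0)
    let V : Matrix (Fin k) (Fin k) ℝ := Matrix.of fun i j =>
      (N / k) * (1 - γ / β) * (if i = j then 1 else 0) + (N / k ^ 2) * (2 * γ / β - 1)
    J * V + V * Jᵀ = -B := by
  intro J B V
  rcases Nat.eq_zero_or_pos k with rfl | hk
  · exact Subsingleton.elim _ _
  set a := N / k * (1 - γ / β)
  set b := N / k ^ 2 * (2 * γ / β - 1)
  have hV : V = a • 1 + b • allOnes (Fin k) ℝ := by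
    ext i j
    simp [V, a, b, one_apply]
  have hB : B = (N * γ * (1 - γ / β)) • SISErlang.tridiag ℝ k := rfl
  have hcancel : a * (2 * γ - β) + b * (k * (γ - β)) = 0 := by
    simp only [a, b]
    field_simp
    ring
  have hscale : a * (k * γ) = N * γ * (1 - γ / β) := by
    simp only [a]
    field_simp
  change SISErlang.drift k β γ * V + V * (SISErlang.drift k β γ)ᵀ = -B
  rw [hV, SISErlang.drift_mul_add_mul_transpose, hcancel, hscale, hB, zero_smul, zero_sub]

/-- The stationary covariance matrix of the multivariate Ornstein–Uhlenbeck
approximation to the SIS model with `k` Erlang infectious stages satisfies the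
Lyapunov equation `J V + V Jᵀ = -B̃`, where `J` is the drift matrix, `B̃` the
local variance matrix, and
`V = (N/k)(1 - γ/β) I + (N/k²)(2γ/β - 1) 𝟙`. -/
theorem sis_erlang_OU_lyapunov
    (k : ℕ) (hk : 0 < k) (β γ N : ℝ) (hβ : 0 < β) (hγ : 0 < γ) (hN : 0 < N) :
    let J : Matrix (Fin k) (Fin k) ℝ := Matrix.of fun i j =>
      if (i : ℕ) = 0 then
        (if (j : ℕ) = 0 then 2 * γ - β - k * γ else 2 * γ - β)
      else if (j : ℕ) + 1 = (i : ℕ) then k * γ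
      else if j = i then -(k * γ)
      else 0
    let B : Matrix (Fin k) (Fin k) ℝ := Matrix.of fun i j =>
      N * γ * (1 - γ / β) *
        (if i = j then 2 else if (i : ℕ) + 1 = (j : ℕ) ∨ (j : ℕ) + 1 = (i : ℕ) then -1 else 0)
    let V : Matrix (Fin k) (Fin k) ℝ := Matrix.of fun i j =>
      (N / k) * (1 - γ / β) * (if i = j then 1 else 0) + (N / k ^ 2) * (2 * γ / β - 1)
    J * V + V * Jᵀ = -B :=
  sis_erlang_OU_lyapunov_general k β γ N hβ
end

section
/- Let k be a positive integer and β, γ > 0. Define, for θ ∈ ℝ^k, u(θ) = Σ_{m=1}^{k} e^{θ_m}, S_k(θ) = ln(u(θ)/k) − (γ/β)(1 − k/u(θ)), and the Hamiltonian H_k(y,θ) = β(Σ_{m=1}^{k} y_m)(1 − Σ_{m=1}^{k} y_m)(e^{θ₁} − 1) + kγ Σ_{m=1}^{k−1} y_m (e^{−θ_m + θ_{m+1}} − 1) + kγ y_k (e^{−θ_k} − 1). Then for every θ ∈ ℝ^k, H_k( ∇S_k(θ), θ ) = 0, where ∇S_k(θ) is the gradient of S_k at θ; moreover S_k(0) =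 0. -/
/-!
Writing `S = φ ∘ u` with `φ x = log (x / k) - (γ / β) (1 - k / x)`, the gradient is
`∇S(θ)_m = φ'(u) e^{θ_m}`. Hence `Σ_m ∇S_m = p := u φ'(u) = 1 - γ k / (β u)`, while the
transition terms telescope: `Σ_m φ'(u) (e^{θ_{m+1}} - e^{θ_m}) = φ'(u) (1 - e^{θ_1})` with
`θ_{k+1} := 0`. The Hamiltonian becomes `(e^{θ_1} - 1) (β p (1 - p) - k γ φ'(u))`, and
`β p (1 - p) = k γ φ'(u)` is an identity in `u`.
-/

open Real Finset

section

variable {ι : Type*} [Fintype ι]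

theorem hasFDerivAt_sum_exp (θ : EuclideanSpace ℝ ι) :
    HasFDerivAt (fun θ : EuclideanSpace ℝ ι => ∑ m, Real.exp (θ m))
      (∑ m, Real.exp (θ m) • EuclideanSpace.proj (𝕜 := ℝ) m) θ :=
  HasFDerivAt.fun_sum fun m _ => by
    exact (hasDerivAt_exp (θ m)).comp_hasFDerivAt θ (EuclideanSpace.proj (𝕜 := ℝ) m).hasFDerivAt

theorem hasGradientAt_of_hasFDerivAt_sum_proj {f : EuclideanSpace ℝ ι → ℝ} {a : ι → ℝ}
    {θ : EuclideanSpace ℝ ι} (hf : HasFDerivAt f (∑ m, a m • EuclideanSpace.proj (𝕜 := ℝ) m) θ) :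
    HasGradientAt f (WithLp.toLp 2 a) θ := by
  rw [hasGradientAt_iff_hasFDerivAt]
  refine hf.congr_fderiv (ContinuousLinearMap.ext fun v => ?_)
  simp [PiLp.inner_apply, mul_comm]

theorem HasDerivAt.hasGradientAt_comp_sum_exp {φ : ℝ → ℝ} {φ' : ℝ} {θ : EuclideanSpace ℝ ι}
    (hφ : HasDerivAt φ φ' (∑ m, Real.exp (θ m))) :
    HasGradientAt (fun θ : EuclideanSpace ℝ ι => φ (∑ m, Real.exp (θ m)))
      (WithLp.toLp 2 fun m => φ' * Real.exp (θ m)) θ := by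
  apply hasGradientAt_of_hasFDerivAt_sum_proj
  have h := hφ.comp_hasFDerivAt θ (hasFDerivAt_sum_exp θ)
  simp only [smul_sum, smul_smul] at h
  exact h

end

theorem hasDerivAt_log_div_sub_mul_one_sub_div {κ x : ℝ} (a : ℝ) (hκ : κ ≠ 0) (hx : x ≠ 0) :
    HasDerivAt (fun y => log (y / κ) - a * (1 - κ / y)) (1 / x - a * (κ / x ^ 2)) x := by
  have hlog : HasDerivAt (fun y => log (y / κ)) (1 / κ / (x / κ)) x :=
    ((hasDerivAt_id x).div_const κ).log (div_ne_zero hx hκ)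
  have hrec : HasDerivAt (fun y => a * (1 - κ / y)) (a * -((0 * x - κ * 1) / x ^ 2)) x :=
    (((hasDerivAt_const x κ).fun_div (hasDerivAt_id' x) hx).const_sub 1).const_mul a
  refine (hlog.sub hrec).congr_deriv ?_
  field_simp
  ring

theorem mul_mul_one_sub_eq_of_deriv {β γ κ x : ℝ} (hβ : β ≠ 0) (hx : x ≠ 0) :
    β * ((1 / x - γ / β * (κ / x ^ 2)) * x) * (1 - (1 / x - γ / β * (κ / x ^ 2)) * x) =
      κ * γ * (1 / x - γ / β * (κ / x ^ 2)) := by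
  field_simp
  ring

/-- `θ_{k+1} := 0` turns the recovery term `y_k (e^{-θ_k} - 1)` into the last transition term. -/
def extendByZero {k : ℕ} (θ : Fin k → ℝ) (n : ℕ) : ℝ := if h : n < k then θ ⟨n, h⟩ else 0

theorem sum_exp_extendByZero_succ_sub {k : ℕ} (hk : 0 < k) (θ : Fin k → ℝ) :
    ∑ m : Fin k, (exp (extendByZero θ (m + 1)) - exp (θ m)) = 1 - exp (θ ⟨0, hk⟩) := by
  have hshift := sum_range_sub (fun n => exp (extendByZero θ n)) k
  rw [← Fin.sum_univ_eq_sum_range] at hshift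
  simpa [extendByZero, hk] using hshift

theorem sis_erlang_hamilton_jacobi_solution_general
    (k : ℕ) (hk : 0 < k) (β γ : ℝ) (hβ : 0 < β) :
    let u : EuclideanSpace ℝ (Fin k) → ℝ := fun θ => ∑ m : Fin k, Real.exp (θ m)
    let S : EuclideanSpace ℝ (Fin k) → ℝ :=
      fun θ => Real.log (u θ / k) - (γ / β) * (1 - k / u θ)
    (∀ θ : EuclideanSpace ℝ (Fin k),
      β * (∑ m : Fin k, gradient S θ m) * (1 - ∑ m : Fin k, gradient S θ m) *
          (Real.exp (θ ⟨0, hk⟩) - 1) +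
        k * γ * ∑ m : Fin k, gradient S θ m *
          (Real.exp (-θ m + (if h : (m : ℕ) + 1 < k then θ ⟨(m : ℕ) + 1, h⟩ else 0)) - 1)
        = 0) ∧
    S 0 = 0 := by
  intro u S
  have hk₀ : (k : ℝ) ≠ 0 := by positivity
  refine ⟨fun θ => ?_, by simp [S, u, hk₀]⟩
  have hu : u θ ≠ 0 := (sum_pos (fun m _ => exp_pos _) ⟨⟨0, hk⟩, mem_univ _⟩).ne'
  set c := 1 / u θ - γ / β * (k / u θ ^ 2)
  have hφ := hasDerivAt_log_div_sub_mul_one_sub_div (γ / β) hk₀ hu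
  have hgrad : ∀ m, gradient S θ m = c * exp (θ m) := fun m => by
    rw [hφ.hasGradientAt_comp_sum_exp.gradient]
  have hsum : ∑ m, gradient S θ m = c * u θ := by simp only [hgrad, ← mul_sum]; rfl
  have hflow : ∑ m : Fin k, gradient S θ m * (exp (-θ m + extendByZero θ (m + 1)) - 1)
      = c * (1 - exp (θ ⟨0, hk⟩)) := by
    rw [← sum_exp_extendByZero_succ_sub hk, mul_sum]
    refine sum_congr rfl fun m _ => ?_
    rw [hgrad, exp_add, exp_neg]
    field_simp
  have hc : β * (c * u θ) * (1 - c * u θ) = k * γ * c := mul_mul_one_sub_eq_of_deriv hβ.ne' hu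
  clear_value c
  unfold extendByZero at hflow
  rw [hsum, hflow]
  linear_combination (exp (θ ⟨0, hk⟩) - 1) * hc

/-- For the SIS model with `k` Erlang infectious stages, the function
`S_k(θ) = ln(u(θ)/k) - (γ/β)(1 - k/u(θ))`, where `u(θ) = Σ_m e^{θ_m}`, solves
the stationary Hamilton–Jacobi equation `H_k(∇S_k(θ), θ) = 0` for every
`θ ∈ ℝ^k`, and satisfies `S_k(0) = 0`. Here
`H_k(y,θ) = β(Σ y_m)(1 - Σ y_m)(e^{θ₁} - 1)
  + kγ Σ_{m=1}^{k-1} y_m (e^{-θ_m + θ_{m+1}} - 1) + kγ y_k (e^{-θ_k} - 1)`. -/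
theorem sis_erlang_hamilton_jacobi_solution
    (k : ℕ) (hk : 0 < k) (β γ : ℝ) (hβ : 0 < β) (hγ : 0 < γ) :
    let u : EuclideanSpace ℝ (Fin k) → ℝ := fun θ => ∑ m : Fin k, Real.exp (θ m)
    let S : EuclideanSpace ℝ (Fin k) → ℝ :=
      fun θ => Real.log (u θ / k) - (γ / β) * (1 - k / u θ)
    (∀ θ : EuclideanSpace ℝ (Fin k),
      β * (∑ m : Fin k, gradient S θ m) * (1 - ∑ m : Fin k, gradient S θ m) *
          (Real.exp (θ ⟨0, hk⟩) - 1) +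
        k * γ * ∑ m : Fin k, gradient S θ m *
          (Real.exp (-θ m + (if h : (m : ℕ) + 1 < k then θ ⟨(m : ℕ) + 1, h⟩ else 0)) - 1)
        = 0) ∧
    S 0 = 0 :=
  sis_erlang_hamilton_jacobi_solution_general k hk β γ hβ
end

section
/- Let k be a positive integer, β, γ > 0 with β > γ, and let z* > 0 be the unique positive real with Σ_{m=1}^{k} (z*)^m = kγ/β. Define θ* ∈ ℝ^k by θ*_m = (k + 1 − m) ln z* for m = 1,…,k, and S_k(θ) = ln( (Σ_{m=1}^{k} e^{θ_m}) / k ) − (γ/β)(1 − k / Σ_{m=1}^{k} e^{θ_m}). Then S_k(θ*) = 1 − (γ/β) − ln(β/γ). Consequently the action A_k = −S_k(θ*) equals (γ/β) − 1 + ln(β/γ) = (1/R₀) − 1 + ln R₀ for every k, where R₀ = β/γ. -/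
/-! At `θ*` every term `e^{θ*_m}` is a power of `z*`, so `Σ e^{θ*_m} = Σ (z*)^m = k r` with
`r = γ/β = 1/R₀`. Substituting, `S_k(θ*) = ln r - r (1 - 1/r) = 1 - r + ln r`, in which `k` has
cancelled. -/

open Finset Real

theorem sum_exp_natCast_sub_mul_log {z : ℝ} (hz : 0 < z) (k : ℕ) :
    ∑ m : Fin k, exp (((k - (m : ℕ) : ℕ) : ℝ) * log z) = ∑ m ∈ range k, z ^ (m + 1) := by
  rw [Fin.sum_univ_eq_sum_range (fun m => exp (((k - m : ℕ) : ℝ) * log z)),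
    ← sum_range_reflect]
  refine sum_congr rfl fun m hm => ?_
  rw [mul_comm, exp_mul, exp_log hz, rpow_natCast]
  have hmk := mem_range.mp hm
  congr 1
  omega

theorem log_div_sub_mul_one_sub_div {k r s : ℝ} (hk : k ≠ 0) (hr : r ≠ 0) (hs : s = k * r) :
    log (s / k) - r * (1 - k / s) = 1 - r + log r := by
  subst hs
  rw [mul_div_cancel_left₀ r hk, div_mul_cancel_left₀ hk, mul_sub, mul_inv_cancel₀ hr]
  ring

/-- For the SIS model with `k` Erlang infectious stages and `R₀ = β/γ > 1`,
evaluating `S_k` at the non-classical equilibrium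
`θ*_m = (k+1-m) ln z*` (where `Σ_{m=1}^k (z*)^m = kγ/β`) gives
`S_k(θ*) = 1 - γ/β - ln(β/γ)`, so the action `A_k = -S_k(θ*)` equals
`(1/R₀) - 1 + ln R₀` for every `k`. -/
theorem sis_erlang_action
    (k : ℕ) (hk : 0 < k) (β γ z : ℝ) (hγ : 0 < γ) (hγβ : γ < β) (hz : 0 < z)
    (hzeq : ∑ m ∈ Finset.range k, z ^ (m + 1) = k * γ / β) :
    let θs : Fin k → ℝ := fun m => ((k - (m : ℕ) : ℕ) : ℝ) * Real.log z
    let S : (Fin k → ℝ) → ℝ := fun θ =>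
      Real.log ((∑ m : Fin k, Real.exp (θ m)) / k) -
        (γ / β) * (1 - k / ∑ m : Fin k, Real.exp (θ m))
    S θs = 1 - γ / β - Real.log (β / γ) ∧
      -S θs = γ / β - 1 + Real.log (β / γ) := by
  intro θs S
  have hβ : β ≠ 0 := (hγ.trans hγβ).ne'
  have hsum : ∑ m : Fin k, exp (θs m) = k * (γ / β) := by
    rw [sum_exp_natCast_sub_mul_log hz, hzeq, mul_div_assoc]
  have hS : S θs = 1 - γ / β - log (β / γ) := by
    dsimp only [S]
    rw [log_div_sub_mul_one_sub_div (Nat.cast_ne_zero.mpr hk.ne')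
      (div_ne_zero hγ.ne' hβ) hsum, ← inv_div, log_inv]
    ring
  exact ⟨hS, by rw [hS]; ring⟩
end

section
/- Let R₀ > 1. Then p = (4 + R₀ − √(R₀(8 + R₀)))/(2R₀) lies in [0,1) and is the unique solution in [0,1) of the equation p (1 + R₀(1 − p)/2)² = 1. -/
/-!
Every equation `p = g(-β(1 - p))` has the trivial root `p = 1`; splitting it off leaves
`R₀²p² - (4R₀ + R₀²)p + 4 = 0`, with roots `(4 + R₀ ± √(R₀(8 + R₀)))/(2R₀)`. Since
`(R₀ - 4)² < R₀(8 + R₀)` exactly when `R₀ > 1`, the larger root then exceeds `1` and the smaller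
one lies in `[0, 1)`.
-/

open Real

theorem erlang2_fixedPoint_iff (R p : ℝ) :
    p * (1 + R * (1 - p) / 2) ^ 2 = 1 ↔
      p = 1 ∨ R ^ 2 * (p * p) + -(4 * R + R ^ 2) * p + 4 = 0 := by
  have hfactor : p * (1 + R * (1 - p) / 2) ^ 2 - 1 =
      (p - 1) * (R ^ 2 * (p * p) + -(4 * R + R ^ 2) * p + 4) / 4 := by ring
  rw [← sub_eq_zero, hfactor, div_eq_zero_iff, mul_eq_zero, sub_eq_zero]
  norm_num

theorem erlang2_quadratic_eq_zero_iff {R : ℝ} (hR : 0 < R) (p : ℝ) :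
    R ^ 2 * (p * p) + -(4 * R + R ^ 2) * p + 4 = 0 ↔
      p = (4 + R + √(R * (8 + R))) / (2 * R) ∨ p = (4 + R - √(R * (8 + R))) / (2 * R) := by
  have hdisc : discrim (R ^ 2) (-(4 * R + R ^ 2)) 4 =
      (R * √(R * (8 + R))) * (R * √(R * (8 + R))) := by
    rw [discrim, mul_mul_mul_comm, mul_self_sqrt (by positivity)]
    ring
  rw [quadratic_eq_zero_iff (by positivity) hdisc]
  have hR0 : R ≠ 0 := hR.ne'
  congr! 2 <;> field_simp

theorem sqrt_mul_eight_add_lt {R : ℝ} (hR : -4 < R) : √(R * (8 + R)) < 4 + R :=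
  (sqrt_lt' (by linarith)).2 (by nlinarith)

theorem abs_sub_four_lt_sqrt_mul_eight_add {R : ℝ} (hR : 1 < R) : |R - 4| < √(R * (8 + R)) := by
  rw [← sqrt_sq_eq_abs]
  exact sqrt_lt_sqrt (sq_nonneg _) (by nlinarith)

theorem erlang2_smallRoot_nonneg {R : ℝ} (hR : 0 < R) :
    0 ≤ (4 + R - √(R * (8 + R))) / (2 * R) :=
  div_nonneg (by linarith [sqrt_mul_eight_add_lt (by linarith : -4 < R)]) (by positivity)

theorem erlang2_smallRoot_lt_one {R : ℝ} (hR : 1 < R) :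
    (4 + R - √(R * (8 + R))) / (2 * R) < 1 := by
  rw [div_lt_one (by positivity)]
  linarith [abs_lt.1 (abs_sub_four_lt_sqrt_mul_eight_add hR)]

theorem one_lt_erlang2_largeRoot {R : ℝ} (hR : 1 < R) :
    1 < (4 + R + √(R * (8 + R))) / (2 * R) := by
  rw [one_lt_div (by positivity)]
  linarith [abs_lt.1 (abs_sub_four_lt_sqrt_mul_eight_add hR)]

/-- For `R₀ > 1`, `p = (4 + R₀ - √(R₀(8 + R₀)))/(2R₀)` lies in `[0,1)` and is
the unique solution in `[0,1)` of `p(1 + R₀(1 - p)/2)² = 1` (the minor-outbreak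
probability for the SIS model with Erlang infectious periods, `k = 2`). -/
theorem sis_erlang2_minor_outbreak_probability (R₀ : ℝ) (hR₀ : 1 < R₀) :
    (0 ≤ (4 + R₀ - Real.sqrt (R₀ * (8 + R₀))) / (2 * R₀) ∧
      (4 + R₀ - Real.sqrt (R₀ * (8 + R₀))) / (2 * R₀) < 1) ∧
    ∀ p : ℝ, (0 ≤ p ∧ p < 1 ∧ p * (1 + R₀ * (1 - p) / 2) ^ 2 = 1) ↔
      p = (4 + R₀ - Real.sqrt (R₀ * (8 + R₀))) / (2 * R₀) := by
  have hR₀pos : 0 < R₀ := by linarith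
  have hnonneg := erlang2_smallRoot_nonneg hR₀pos
  have hlt := erlang2_smallRoot_lt_one hR₀
  refine ⟨⟨hnonneg, hlt⟩, fun p => ⟨fun ⟨_, hp1, hfix⟩ => ?_, ?_⟩⟩
  · rcases (erlang2_fixedPoint_iff R₀ p).1 hfix with rfl | hquad
    · exact absurd hp1 (lt_irrefl 1)
    rcases (erlang2_quadratic_eq_zero_iff hR₀pos p).1 hquad with rfl | hsmall
    · exact absurd hp1 (one_lt_erlang2_largeRoot hR₀).not_gt
    · exact hsmall
  · rintro rfl
    exact ⟨hnonneg, hlt, (erlang2_fixedPoint_iff R₀ _).2 <|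
      .inr <| (erlang2_quadratic_eq_zero_iff hR₀pos _).2 (.inr rfl)⟩
end

section
/- Let N be a positive integer, β, γ > 0, R₀ = β/γ. Define τ₀ = 0 and, for 1 ≤ i ≤ N, τ_i = (1/γ) Σ_{m=1}^{i} Σ_{j=m}^{N} (1/j) (R₀/N)^{j−m} (N−m)!/(N−j)!. Then for every i with 1 ≤ i ≤ N, (β/N) i (N − i)(τ_{i+1} − τ_i) + γ i (τ_{i−1} − τ_i) = −1, where for i = N the first term is zero (so the value of τ_{N+1} is irrelevant, e.g. take τ_{N+1} = τ_N). -/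
/-!
Writing `S_m = Σ_{j=m}^N (1/j) r^{j-m} (N-m)!/(N-j)!` with `r = R₀/N`, Norden's formula says
`τ_i - τ_{i-1} = S_i / γ`, and peeling off the `j = m` term gives `S_m = 1/m + r (N-m) S_{m+1}`.
Since `β/N = γ r`, the left-hand side of the equation at `i` is `i (r (N-i) S_{i+1} - S_i) = -1`.
-/

open Finset

noncomputable def nordenSum {K : Type*} [Field K] (N : ℕ) (r : K) (m : ℕ) : K :=
  ∑ j ∈ Icc m N,
    (1 / (j : K)) * r ^ (j - m) * ((N - m).factorial : K) / ((N - j).factorial : K)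

-- For `m = 0` both sides lose their `1/0` term, so no lower bound on `m` is needed.
lemma nordenSum_eq_inv_add {K : Type*} [Field K] [CharZero K] (N : ℕ) (r : K) {m : ℕ}
    (hm : m ≤ N) :
    nordenSum N r m = 1 / m + r * ((N - m : ℕ) : K) * nordenSum N r (m + 1) := by
  have hIcc : Icc m N = insert m (Icc (m + 1) N) := by
    rw [Icc_add_one_left_eq_Ioc, Ioc_insert_left hm]
  rw [nordenSum, hIcc, sum_insert (by simp), nordenSum, mul_sum]
  congr 1
  · have : ((N - m).factorial : K) ≠ 0 := Nat.cast_ne_zero.mpr (Nat.factorial_ne_zero _)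
    field_simp
    simp
  · refine sum_congr rfl fun j hj => ?_
    obtain ⟨hmj, hjN⟩ := mem_Icc.mp hj
    rw [show j - m = j - (m + 1) + 1 by omega, show N - m = N - (m + 1) + 1 by omega,
      pow_succ, Nat.factorial_succ]
    push_cast
    ring

lemma sub_eq_of_eq_mul_sum_Icc {K : Type*} [CommRing K] {τ f : ℕ → K} {c : K} {n : ℕ}
    (h : ∀ k ≤ n, τ k = c * ∑ m ∈ Icc 1 k, f m) {k : ℕ} (hk : k < n) :
    τ (k + 1) - τ k = c * f (k + 1) := by
  rw [h (k + 1) hk, h k hk.le, sum_Icc_succ_top (by omega)]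
  ring

theorem sis_norden_formula_solves_system_general
    (N : ℕ) (β γ : ℝ) (hγ : 0 < γ)
    (τ : ℕ → ℝ) (hτ0 : τ 0 = 0)
    (hτ : ∀ i : ℕ, 1 ≤ i → i ≤ N →
      τ i = (1 / γ) * ∑ m ∈ Finset.Icc 1 i, ∑ j ∈ Finset.Icc m N,
        (1 / (j : ℝ)) * ((β / γ) / N) ^ (j - m) *
          ((N - m).factorial : ℝ) / ((N - j).factorial : ℝ))
    (hτN : τ (N + 1) = τ N) :
    ∀ i : ℕ, 1 ≤ i → i ≤ N →
      (β / N) * i * ((N : ℝ) - i) * (τ (i + 1) - τ i) +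
        γ * i * (τ (i - 1) - τ i) = -1 := by
  intro i hi hiN
  set r : ℝ := (β / γ) / N
  have hform : ∀ k ≤ N, τ k = (1 / γ) * ∑ m ∈ Icc 1 k, nordenSum N r m := by
    intro k hk
    rcases Nat.eq_zero_or_pos k with rfl | hk0
    · simp [hτ0]
    · exact hτ k hk0 hk
  have hup : (β / N) * i * ((N : ℝ) - i) * (τ (i + 1) - τ i) =
      (β / N) * i * ((N : ℝ) - i) * ((1 / γ) * nordenSum N r (i + 1)) := by
    rcases hiN.lt_or_eq with hlt | rfl
    · rw [sub_eq_of_eq_mul_sum_Icc hform hlt]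
    · simp
  have hdown : τ (i - 1) - τ i = -((1 / γ) * nordenSum N r i) := by
    obtain ⟨k, rfl⟩ : ∃ k, i = k + 1 := ⟨i - 1, by omega⟩
    rw [Nat.add_sub_cancel, ← sub_eq_of_eq_mul_sum_Icc hform hiN]
    ring
  have hN : (N : ℝ) ≠ 0 := by norm_cast; omega
  have hi0 : (i : ℝ) ≠ 0 := by norm_cast; omega
  rw [hup, hdown, nordenSum_eq_inv_add N r hiN, Nat.cast_sub hiN]
  simp only [r]
  field_simp
  ring

/-- Norden's explicit formula for the mean extinction time of the classic SIS
model satisfies the defining linear system `Q_C τ = -1`: with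
`τ_i = (1/γ) Σ_{m=1}^i Σ_{j=m}^N (1/j)(R₀/N)^{j-m} (N-m)!/(N-j)!`, `τ₀ = 0`
and `τ_{N+1} = τ_N`, we have for `1 ≤ i ≤ N`
`(β/N) i (N-i)(τ_{i+1} - τ_i) + γ i (τ_{i-1} - τ_i) = -1`
(for `i = N` the first term vanishes since `N - i = 0`). -/
theorem sis_norden_formula_solves_system
    (N : ℕ) (hN : 0 < N) (β γ : ℝ) (hβ : 0 < β) (hγ : 0 < γ)
    (τ : ℕ → ℝ) (hτ0 : τ 0 = 0)
    (hτ : ∀ i : ℕ, 1 ≤ i → i ≤ N →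
      τ i = (1 / γ) * ∑ m ∈ Finset.Icc 1 i, ∑ j ∈ Finset.Icc m N,
        (1 / (j : ℝ)) * ((β / γ) / N) ^ (j - m) *
          ((N - m).factorial : ℝ) / ((N - j).factorial : ℝ))
    (hτN : τ (N + 1) = τ N) :
    ∀ i : ℕ, 1 ≤ i → i ≤ N →
      (β / N) * i * ((N : ℝ) - i) * (τ (i + 1) - τ i) +
        γ * i * (τ (i - 1) - τ i) = -1 :=
  sis_norden_formula_solves_system_general N β γ hγ τ hτ0 hτ hτN
end

section
/- Let 0 < β < γ and set R₀ = β/γ (so 0 < R₀ < 1). Define τ₀ = 0 and, for each integer i ≥ 1, τ_i = (1/γ)(1/(1 − R₀)) ( (1 − R₀^{−i}) ln(1 − R₀) + Σ_{m=1}^{i−1} (1 − R₀^{m−i})/m ). Then for every i ≥ 1, β i (τ_{i+1} − τ_i) + γ i (τ_{i−1} − τ_i) = −1. -/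
/-- The bracketed expression in the mean extinction time formula. -/
noncomputable def bdF (R : ℝ) (i : ℕ) : ℝ :=
  (1 - R ^ (-(i : ℤ))) * Real.log (1 - R) +
    ∑ m ∈ Finset.Icc 1 (i - 1), (1 - R ^ ((m : ℤ) - (i : ℤ))) / (m : ℝ)

lemma bd_hmul (R : ℝ) (hR : R ≠ 0) (n : ℤ) : R * R ^ (n - 1) = R ^ n := by
  rw [zpow_sub_one₀ hR]
  field_simp

lemma bd_master (R : ℝ) (hR : R ≠ 0) (i : ℕ) :
    R * bdF R (i + 1) - bdF R i
      = (R - 1) * (Real.log (1 - R) + ∑ m ∈ Finset.Icc 1 i, 1 / (m : ℝ)) := by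
  rcases i with _ | j
  · simp only [bdF]
    norm_num
    linear_combination (-Real.log (1 - R)) * (mul_inv_cancel₀ hR)
  · simp only [bdF]
    have hcast1 : ((j + 1 + 1 : ℕ) : ℤ) = (j : ℤ) + 2 := by push_cast; ring
    have hcast2 : ((j + 1 : ℕ) : ℤ) = (j : ℤ) + 1 := by push_cast; ring
    have hI1 : (j + 1 + 1 : ℕ) - 1 = j + 1 := rfl
    have hI2 : (j + 1 : ℕ) - 1 = j := rfl
    rw [hI1, hI2, hcast1, hcast2]
    have hL : R * R ^ (-((j : ℤ) + 2)) = R ^ (-((j : ℤ) + 1)) := by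
      have := bd_hmul R hR (-((j : ℤ) + 1))
      rw [show -((j : ℤ) + 1) - 1 = -((j : ℤ) + 2) by ring] at this
      exact this
    have htop : R * R ^ (((j : ℤ) + 1) - ((j : ℤ) + 2)) = 1 := by
      have := bd_hmul R hR 0
      rw [show ((j : ℤ) + 1) - ((j : ℤ) + 2) = (0 : ℤ) - 1 by ring]
      simpa using this
    rw [Finset.sum_Icc_succ_top (Nat.one_le_iff_ne_zero.mpr (Nat.succ_ne_zero j)),
        Finset.sum_Icc_succ_top (Nat.one_le_iff_ne_zero.mpr (Nat.succ_ne_zero j))]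
    have hsum : R * ∑ m ∈ Finset.Icc 1 j, (1 - R ^ ((m : ℤ) - ((j : ℤ) + 2))) / (m : ℝ)
        = ∑ m ∈ Finset.Icc 1 j, ((1 - R ^ ((m : ℤ) - ((j : ℤ) + 1))) / (m : ℝ)
            + (R - 1) * (1 / (m : ℝ))) := by
      rw [Finset.mul_sum]
      refine Finset.sum_congr rfl fun m hm => ?_
      have hm1 : 1 ≤ m := (Finset.mem_Icc.mp hm).1
      have hmne : (m : ℝ) ≠ 0 := Nat.cast_ne_zero.mpr (by omega)
      have hz : R * R ^ ((m : ℤ) - ((j : ℤ) + 2)) = R ^ ((m : ℤ) - ((j : ℤ) + 1)) := by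
        have := bd_hmul R hR ((m : ℤ) - ((j : ℤ) + 1))
        rw [show (m : ℤ) - ((j : ℤ) + 1) - 1 = (m : ℤ) - ((j : ℤ) + 2) by ring] at this
        exact this
      field_simp
      nlinarith [hz]
    rw [Finset.sum_add_distrib, ← Finset.mul_sum] at hsum
    push_cast
    linear_combination hsum + (-Real.log (1 - R)) * hL + (-(1 / ((j : ℝ) + 1))) * htop

/-- The explicit mean-extinction-time formula for the subcritical linear
birth-death process solves its defining recurrence: for `0 < β < γ`,
`R₀ = β/γ`, `τ₀ = 0` and
`τ_i = (1/γ)(1/(1-R₀))((1 - R₀^{-i}) ln(1-R₀) + Σ_{m=1}^{i-1} (1 - R₀^{m-i})/m)`,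
we have `β i (τ_{i+1} - τ i) + γ i (τ_{i-1} - τ_i) = -1` for all `i ≥ 1`. -/
theorem linear_birth_death_extinction_time
    (β γ : ℝ) (hβ : 0 < β) (hβγ : β < γ)
    (τ : ℕ → ℝ) (hτ0 : τ 0 = 0)
    (hτ : ∀ i : ℕ, 1 ≤ i →
      τ i = (1 / γ) * (1 / (1 - β / γ)) *
        ((1 - (β / γ) ^ (-(i : ℤ))) * Real.log (1 - β / γ) +
          ∑ m ∈ Finset.Icc 1 (i - 1), (1 - (β / γ) ^ ((m : ℤ) - (i : ℤ))) / (m : ℝ))) :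
    ∀ i : ℕ, 1 ≤ i →
      β * i * (τ (i + 1) - τ i) + γ * i * (τ (i - 1) - τ i) = -1 := by
  have hγ : 0 < γ := hβ.trans hβγ
  have hγne : γ ≠ 0 := ne_of_gt hγ
  set R := β / γ with hRdef
  have hR0 : 0 < R := div_pos hβ hγ
  have hRne : R ≠ 0 := ne_of_gt hR0
  have hR1 : R < 1 := (div_lt_one hγ).mpr hβγ
  have h1R : (1 : ℝ) - R ≠ 0 := by linarith
  have hβR : β = γ * R := by rw [hRdef]; field_simp
  have hτ' : ∀ i : ℕ, τ i = (1 / γ) * (1 / (1 - R)) * bdF R i := by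
    intro i
    rcases Nat.eq_zero_or_pos i with h | h
    · subst h; simp [hτ0, bdF]
    · rw [hτ i h]; rfl
  intro i hi
  obtain ⟨j, rfl⟩ : ∃ j, i = j + 1 := ⟨i - 1, by omega⟩
  have M1 := bd_master R hRne (j + 1)
  have M0 := bd_master R hRne j
  have Hstep : ∑ m ∈ Finset.Icc 1 (j + 1), 1 / (m : ℝ)
      = (∑ m ∈ Finset.Icc 1 j, 1 / (m : ℝ)) + 1 / ((j : ℝ) + 1) := by
    rw [Finset.sum_Icc_succ_top (Nat.one_le_iff_ne_zero.mpr (Nat.succ_ne_zero j))]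
    push_cast; ring
  have hjne : ((j : ℝ) + 1) ≠ 0 := by positivity
  have key : R * bdF R (j + 1 + 1) - bdF R (j + 1) - (R * bdF R (j + 1) - bdF R j)
      = (R - 1) * (1 / ((j : ℝ) + 1)) := by
    rw [M1, M0, Hstep]; ring
  have hIdc : (j + 1 - 1 : ℕ) = j := rfl
  rw [hτ' (j + 1 + 1), hτ' (j + 1), hIdc, hτ' j, hβR]
  have hcast : ((j + 1 : ℕ) : ℝ) = (j : ℝ) + 1 := by push_cast; ring
  rw [hcast]
  set A := bdF R (j + 1 + 1)
  set B := bdF R (j + 1)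
  set C := bdF R j
  have k2 : ((j : ℝ) + 1) * (R * A - (R + 1) * B + C) = R - 1 := by
    rw [show R * A - (R + 1) * B + C = (R - 1) * (1 / ((j : ℝ) + 1)) by linear_combination key]
    field_simp
  field_simp
  nlinarith [k2]
end

section
/- Let k be a positive integer and β, γ > 0 with β ≠ γ. Define the vector field F : ℝ^k → ℝ^k by F₁(y) = β (1 − Σ_{m=1}^{k} y_m)(Σ_{m=1}^{k} y_m) − kγ y₁ and F_m(y) = kγ(y_{m−1} − y_m) for m = 2,…,k. Then F(y) = 0 if and only if y = 0 or y = ((1 − γ/β)/k) 𝟙, where 𝟙 ∈ ℝ^k is the all-ones vector. -/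
/-!
The equations for the stages after the first say that consecutive stages carry the same
prevalence, so an equilibrium is a constant vector `c 𝟙`. The first equation then reduces to the
logistic balance `s (β (1 - s) - γ) = 0` for the total prevalence `s = k c`.
-/

theorem Fin.forall_castSucc_eq_succ_iff_exists_const {n : ℕ} {α : Type*} {y : Fin (n + 1) → α} :
    (∀ j : Fin n, y j.castSucc = y j.succ) ↔ ∃ c, y = fun _ => c := by
  refine ⟨fun h => ⟨y 0, funext fun i => ?_⟩, ?_⟩
  · induction i using Fin.induction with
    | zero => rfl
    | succ j ih => rw [← h j, ih]
  · rintro ⟨c, rfl⟩ j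
    rfl

theorem logistic_balance_eq_zero_iff {k β γ c : ℝ} (hk : k ≠ 0) (hβ : β ≠ 0) :
    β * (1 - k * c) * (k * c) - γ * (k * c) = 0 ↔ c = 0 ∨ c = (1 - γ / β) / k := by
  have hfactor : β * (1 - k * c) * (k * c) - γ * (k * c) = (k * c) * (β * k * ((1 - γ / β) / k - c)) := by
    field_simp
    ring
  rw [hfactor]
  simp [hk, hβ, sub_eq_zero, eq_comm (a := (1 - γ / β) / k)]

-- Stages are indexed from `0`, so paper stage `m` is index `m - 1`.
def sisErlangField (k : ℕ) (β γ : ℝ) (y : Fin k → ℝ) : Fin k → ℝ := fun i =>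
  if (i : ℕ) = 0 then
    β * (1 - ∑ m : Fin k, y m) * (∑ m : Fin k, y m) - k * γ * y i
  else
    k * γ * (y ⟨(i : ℕ) - 1, lt_of_le_of_lt (Nat.sub_le _ _) i.isLt⟩ - y i)

theorem sisErlangField_const_zero {n : ℕ} (β γ c : ℝ) :
    sisErlangField (n + 1) β γ (fun _ => c) 0 =
      β * (1 - (n + 1 : ℕ) * c) * ((n + 1 : ℕ) * c) - γ * ((n + 1 : ℕ) * c) := by
  simp only [sisErlangField, Fin.val_zero, if_true, Finset.sum_const, Finset.card_univ,
    Fintype.card_fin, nsmul_eq_mul]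
  ring

theorem sisErlangField_succ_eq_zero_iff {n : ℕ} {β γ : ℝ} (hγ : γ ≠ 0) (y : Fin (n + 1) → ℝ)
    (j : Fin n) : sisErlangField (n + 1) β γ y j.succ = 0 ↔ y j.castSucc = y j.succ := by
  have hrate : ((n + 1 : ℕ) : ℝ) * γ ≠ 0 := mul_ne_zero (Nat.cast_ne_zero.2 n.succ_ne_zero) hγ
  simp only [sisErlangField, Fin.val_succ, Nat.add_sub_cancel, Nat.succ_ne_zero, if_false,
    mul_eq_zero, hrate, false_or, sub_eq_zero]
  rfl

theorem sisErlangField_eq_zero_iff {n : ℕ} {β γ : ℝ} (hγ : γ ≠ 0) (y : Fin (n + 1) → ℝ) :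
    sisErlangField (n + 1) β γ y = 0 ↔ ∃ c, y = (fun _ => c) ∧
      β * (1 - (n + 1 : ℕ) * c) * ((n + 1 : ℕ) * c) - γ * ((n + 1 : ℕ) * c) = 0 := by
  rw [funext_iff, Fin.forall_fin_succ]
  simp only [Pi.zero_apply, sisErlangField_succ_eq_zero_iff hγ,
    Fin.forall_castSucc_eq_succ_iff_exists_const]
  constructor
  · rintro ⟨h0, c, rfl⟩
    exact ⟨c, rfl, by rwa [← sisErlangField_const_zero]⟩
  · rintro ⟨c, rfl, hc⟩
    exact ⟨by rwa [sisErlangField_const_zero], c, rfl⟩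

theorem sis_erlang_deterministic_equilibria_general
    (k : ℕ) (β γ : ℝ) (hβ : 0 < β) (hγ : 0 < γ) :
    let F : (Fin k → ℝ) → (Fin k → ℝ) := fun y i =>
      if (i : ℕ) = 0 then
        β * (1 - ∑ m : Fin k, y m) * (∑ m : Fin k, y m) - k * γ * y i
      else
        k * γ * (y ⟨(i : ℕ) - 1, lt_of_le_of_lt (Nat.sub_le _ _) i.isLt⟩ - y i)
    ∀ y : Fin k → ℝ,
      F y = 0 ↔ (y = 0 ∨ y = fun _ => (1 - γ / β) / k) := by
  intro F y
  obtain _ | n := k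
  · exact iff_of_true (Subsingleton.elim _ _) (.inl (Subsingleton.elim _ _))
  change sisErlangField (n + 1) β γ y = 0 ↔ _
  rw [sisErlangField_eq_zero_iff hγ.ne']
  simp only [logistic_balance_eq_zero_iff (Nat.cast_ne_zero.2 n.succ_ne_zero) hβ.ne', and_or_left,
    exists_or, exists_eq_right, Pi.zero_def]

/-- Equilibria of the deterministic SIS model with `k` Erlang infectious
stages: the vector field `F` with `F₁(y) = β(1 - Σ y_m)(Σ y_m) - kγ y₁` and
`F_m(y) = kγ(y_{m-1} - y_m)` for `m = 2,…,k` vanishes exactly at the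
disease-free equilibrium `y = 0` and at the endemic equilibrium
`y = ((1 - γ/β)/k) 𝟙`. -/
theorem sis_erlang_deterministic_equilibria
    (k : ℕ) (hk : 0 < k) (β γ : ℝ) (hβ : 0 < β) (hγ : 0 < γ) (hne : β ≠ γ) :
    let F : (Fin k → ℝ) → (Fin k → ℝ) := fun y i =>
      if (i : ℕ) = 0 then
        β * (1 - ∑ m : Fin k, y m) * (∑ m : Fin k, y m) - k * γ * y i
      else
        k * γ * (y ⟨(i : ℕ) - 1, lt_of_le_of_lt (Nat.sub_le _ _) i.isLt⟩ - y i)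
    ∀ y : Fin k → ℝ,
      F y = 0 ↔ (y = 0 ∨ y = fun _ => (1 - γ / β) / k) :=
  sis_erlang_deterministic_equilibria_general k β γ hβ hγ
end
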